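/- Define ℰ : Int D → ℂ by ℰ(x,y) = (1 − i √x √(1−y) + i √y √(1−x)) / (1 + i √x √(1−y) − i √y √(1−x)) (the Nutku–Halil solution), which is well defined since the denominator has real part 1. Then ℰ satisfies the hyperbolic Ernst equation at every point of Int D; moreover Re ℰ > 0 on Int D, and for each y ∈ [0,1): lim_{x↓0} √x · ℰ_x(x,y) = i √(1−y)/(i+√y)², and for each x ∈ [0,1): lim_{y↓0} √y · ℰ_y(x,y) = −i √(1−x)/(i−√x)². -/

import Mathlib

open Complex Set MeasureTheory Topology Filter ComplexConjugate

noncomputable section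

/-- The triangle `D = {(x,y) : 0 ≤ x, 0 ≤ y, x + y < 1}`. -/
def TriD : Set (ℝ × ℝ) := {p | 0 ≤ p.1 ∧ 0 ≤ p.2 ∧ p.1 + p.2 < 1}

/-- Partial derivative in the first variable. -/
def pdx (f : ℝ → ℝ → ℂ) (x y : ℝ) : ℂ := deriv (fun t => f t y) x

/-- Partial derivative in the second variable. -/
def pdy (f : ℝ → ℝ → ℂ) (x y : ℝ) : ℂ := deriv (fun t => f x t) y

/-- Mixed second partial derivative. -/
def pdxy (f : ℝ → ℝ → ℂ) (x y : ℝ) : ℂ := pdx (fun a b => pdy f a b) x y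

/-- Partial derivative in the first variable (real valued). -/
def pdxR (f : ℝ → ℝ → ℝ) (x y : ℝ) : ℝ := deriv (fun t => f t y) x

/-- Partial derivative in the second variable (real valued). -/
def pdyR (f : ℝ → ℝ → ℝ) (x y : ℝ) : ℝ := deriv (fun t => f x t) y

/-- Mixed second partial derivative (real valued). -/
def pdxyR (f : ℝ → ℝ → ℝ) (x y : ℝ) : ℝ := pdxR (fun a b => pdyR f a b) x y

/-- The hyperbolic Ernst equation at a point. -/
def ErnstEqAt (E : ℝ → ℝ → ℂ) (x y : ℝ) : Prop :=
  (((E x y).re : ℂ)) * (pdxy E x y - (pdx E x y + pdy E x y) / (2 * (1 - x - y))) =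
    pdx E x y * pdy E x y

/-- The Euler–Darboux equation at a point. -/
def EulerDarbouxAt (V : ℝ → ℝ → ℝ) (x y : ℝ) : Prop :=
  pdxyR V x y - (pdxR V x y + pdyR V x y) / (2 * (1 - x - y)) = 0

/-- `λ(x,y,k) = √((k-(1-y))/(k-x))`, principal branch (`Re λ > 0` off the cut). -/
def lam (x y : ℝ) (k : ℂ) : ℂ := ((k - (1 - (y : ℂ))) / (k - (x : ℂ))) ^ (1/2 : ℂ)

/-- The segment `[0,1]` inside `ℂ`. -/
def seg01 : Set ℂ := (fun t : ℝ => (t : ℂ)) '' Icc 0 1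

/-- A `C^n`-solution of the Goursat problem for the hyperbolic Ernst equation in `D`
with data `{E0, E1}`, with regularity exponent `α`. -/
def ErnstSolutionWith (n : ℕ) (α : ℝ) (E : ℝ → ℝ → ℂ) (E0 E1 : ℝ → ℂ) : Prop :=
  ContinuousOn (fun p : ℝ × ℝ => E p.1 p.2) TriD ∧
  ContDiffOn ℝ n (fun p : ℝ × ℝ => E p.1 p.2) (interior TriD) ∧
  (∀ p ∈ interior TriD, ErnstEqAt E p.1 p.2) ∧
  (∃ g : ℝ × ℝ → ℂ, ContinuousOn g TriD ∧
      ∀ p ∈ interior TriD, g p = ((p.1 ^ α : ℝ) : ℂ) * pdx E p.1 p.2) ∧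
  (∃ g : ℝ × ℝ → ℂ, ContinuousOn g TriD ∧
      ∀ p ∈ interior TriD, g p = ((p.2 ^ α : ℝ) : ℂ) * pdy E p.1 p.2) ∧
  (∃ g : ℝ × ℝ → ℂ, ContinuousOn g TriD ∧
      ∀ p ∈ interior TriD, g p = ((p.1 ^ α * p.2 ^ α : ℝ) : ℂ) * pdxy E p.1 p.2) ∧
  (∀ x ∈ Ico (0:ℝ) 1, E x 0 = E0 x) ∧
  (∀ y ∈ Ico (0:ℝ) 1, E 0 y = E1 y) ∧
  (∀ p ∈ TriD, 0 < (E p.1 p.2).re)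

/-- A `C^n`-solution of the Goursat problem for the hyperbolic Ernst equation in `D`
(with regularity exponent `α` existentially quantified over `[0,1)`). -/
def ErnstSolution (n : ℕ) (E : ℝ → ℝ → ℂ) (E0 E1 : ℝ → ℂ) : Prop :=
  ∃ α ∈ Ico (0:ℝ) 1, ErnstSolutionWith n α E E0 E1

/-- A `C^n`-solution of the Goursat problem for the Euler–Darboux equation in `D`
with data `{V0, V1}`, with regularity exponent `α`. -/
def EDSolutionWith (n : ℕ) (α : ℝ) (V : ℝ → ℝ → ℝ) (V0 V1 : ℝ → ℝ) : Prop :=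
  ContinuousOn (fun p : ℝ × ℝ => V p.1 p.2) TriD ∧
  ContDiffOn ℝ n (fun p : ℝ × ℝ => V p.1 p.2) (interior TriD) ∧
  (∀ p ∈ interior TriD, EulerDarbouxAt V p.1 p.2) ∧
  (∃ g : ℝ × ℝ → ℝ, ContinuousOn g TriD ∧
      ∀ p ∈ interior TriD, g p = p.1 ^ α * pdxR V p.1 p.2) ∧
  (∃ g : ℝ × ℝ → ℝ, ContinuousOn g TriD ∧
      ∀ p ∈ interior TriD, g p = p.2 ^ α * pdyR V p.1 p.2) ∧
  (∃ g : ℝ × ℝ → ℝ, ContinuousOn g TriD ∧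
      ∀ p ∈ interior TriD, g p = p.1 ^ α * p.2 ^ α * pdxyR V p.1 p.2) ∧
  (∀ x ∈ Ico (0:ℝ) 1, V x 0 = V0 x) ∧
  (∀ y ∈ Ico (0:ℝ) 1, V 0 y = V1 y)

/-- A `C^n`-solution of the Goursat problem for the Euler–Darboux equation in `D`. -/
def EDSolution (n : ℕ) (V : ℝ → ℝ → ℝ) (V0 V1 : ℝ → ℝ) : Prop :=
  ∃ α ∈ Ico (0:ℝ) 1, EDSolutionWith n α V V0 V1

/-- The data assumptions (1.5) on a single boundary datum for the Ernst equation. -/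
def ErnstData (n : ℕ) (α : ℝ) (E0 : ℝ → ℂ) : Prop :=
  ContinuousOn E0 (Ico 0 1) ∧ ContDiffOn ℝ n E0 (Ioo 0 1) ∧
  (∃ g : ℝ → ℂ, ContinuousOn g (Ico 0 1) ∧
      ∀ x ∈ Ioo (0:ℝ) 1, g x = ((x ^ α : ℝ) : ℂ) * deriv E0 x) ∧
  E0 0 = 1 ∧ (∀ x ∈ Ico (0:ℝ) 1, 0 < (E0 x).re)

/-- The data assumptions on a single boundary datum for the Euler–Darboux equation. -/
def EDData (n : ℕ) (α : ℝ) (V0 : ℝ → ℝ) : Prop :=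
  ContinuousOn V0 (Ico 0 1) ∧ ContDiffOn ℝ n V0 (Ioo 0 1) ∧
  (∃ g : ℝ → ℝ, ContinuousOn g (Ico 0 1) ∧
      ∀ x ∈ Ioo (0:ℝ) 1, g x = x ^ α * deriv V0 x) ∧
  V0 0 = 0

/-- The matrix `U0(x,k)` of the x-part of the Lax pair, built from the boundary datum. -/
def U0mat (E0 : ℝ → ℂ) (x : ℝ) (k : ℂ) : Matrix (Fin 2) (Fin 2) ℂ :=
  (1 / (2 * ((E0 x).re : ℂ))) •
    !![conj (deriv E0 x), lam x 0 k * conj (deriv E0 x);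
       lam x 0 k * deriv E0 x, deriv E0 x]

/-- The matrix `U(x,y,k)` of the Lax pair. -/
def Umat (E : ℝ → ℝ → ℂ) (k : ℂ) (x y : ℝ) : Matrix (Fin 2) (Fin 2) ℂ :=
  (1 / (2 * ((E x y).re : ℂ))) •
    !![conj (pdx E x y), lam x y k * conj (pdx E x y);
       lam x y k * pdx E x y, pdx E x y]

/-- The matrix `V(x,y,k)` of the Lax pair. -/
def Vmat (E : ℝ → ℝ → ℂ) (k : ℂ) (x y : ℝ) : Matrix (Fin 2) (Fin 2) ℂ :=
  (1 / (2 * ((E x y).re : ℂ))) •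
    !![conj (pdy E x y), (lam x y k)⁻¹ * conj (pdy E x y);
       (lam x y k)⁻¹ * pdy E x y, pdy E x y]

/-- The Nutku–Halil Ernst potential. -/
def NutkuHalil (x y : ℝ) : ℂ :=
  (1 - Complex.I * ((Real.sqrt x * Real.sqrt (1 - y) : ℝ) : ℂ)
      + Complex.I * ((Real.sqrt y * Real.sqrt (1 - x) : ℝ) : ℂ)) /
    (1 + Complex.I * ((Real.sqrt x * Real.sqrt (1 - y) : ℝ) : ℂ)
      - Complex.I * ((Real.sqrt y * Real.sqrt (1 - x) : ℝ) : ℂ))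

/-!
Write `√x = sin α` and `√y = sin β`. Then `ℰ = (1 - i u) / (1 + i u)` with `u = sin (α - β)` real.
For such a Cayley transform of a real function the Ernst equation is equivalent to the real
equation `(1 - u²) (u_xy - (u_x + u_y) / (2 (1 - x - y))) + 2 u u_x u_y = 0`. Since `α' = κ(x)`
with `κ(x) = 1 / (2 √x √(1 - x))`, the functions `u = sin (α - β)` and `c = cos (α - β)` rotate
into each other under differentiation, and the real equation becomes the identity
`(1 - x - y) sin (α - β) = cos (α - β) (sin α cos α - sin β cos β)`.
Moreover `Re ℰ = c² / (1 + u²) > 0`, the boundary limits come from `√x κ(x) → 1/2`, and the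
`y`-limit follows from the `x`-limit through the symmetry `ℰ(x, y) = conj ℰ(y, x)`.
-/

def cayley (s : ℝ) : ℂ := (1 - I * s) / (1 + I * s)

def cayleyDeriv (s : ℝ) : ℂ := -2 * I / (1 + I * s) ^ 2

lemma one_add_I_mul_ofReal_ne_zero (s : ℝ) : 1 + I * (s : ℂ) ≠ 0 := by
  intro h
  simpa using congrArg re h

lemma cayley_re (s : ℝ) : (cayley s).re = (1 - s ^ 2) / (1 + s ^ 2) := by
  simp [cayley, div_re, normSq_apply]
  ring

lemma cayley_neg (s : ℝ) : cayley (-s) = conj (cayley s) := by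
  simp [cayley]

lemma hasDerivAt_one_add_I_mul_ofReal (s : ℝ) :
    HasDerivAt (fun t : ℝ => 1 + I * t) I s := by
  simpa using ((hasDerivAt_id s).ofReal_comp.const_mul I).const_add 1

lemma hasDerivAt_cayley (s : ℝ) : HasDerivAt cayley (cayleyDeriv s) s := by
  have hn : HasDerivAt (fun t : ℝ => 1 - I * t) (-I) s := by
    simpa using ((hasDerivAt_id s).ofReal_comp.const_mul I).const_sub 1
  refine (hn.div (hasDerivAt_one_add_I_mul_ofReal s)
    (one_add_I_mul_ofReal_ne_zero s)).congr_deriv ?_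
  rw [cayleyDeriv]
  ring

lemma hasDerivAt_cayleyDeriv (s : ℝ) :
    HasDerivAt cayleyDeriv (-4 / (1 + I * s) ^ 3) s := by
  have hne := one_add_I_mul_ofReal_ne_zero s
  refine ((hasDerivAt_const s (-2 * I)).div ((hasDerivAt_one_add_I_mul_ofReal s).fun_pow 2)
    (pow_ne_zero 2 hne)).congr_deriv ?_
  field_simp
  linear_combination (4 * (1 + I * s)) * I_sq

lemma HasDerivAt.cayley {u : ℝ → ℝ} {u' x : ℝ} (h : HasDerivAt u u' x) :
    HasDerivAt (fun t => cayley (u t)) (u' * cayleyDeriv (u x)) x := by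
  rw [← real_smul]
  exact (hasDerivAt_cayley (u x)).scomp x h

lemma HasDerivAt.cayleyDeriv {u : ℝ → ℝ} {u' x : ℝ} (h : HasDerivAt u u' x) :
    HasDerivAt (fun t => cayleyDeriv (u t)) (u' * (-4 / (1 + I * u x) ^ 3)) x := by
  rw [← real_smul]
  exact (hasDerivAt_cayleyDeriv (u x)).scomp x h

lemma continuous_cayleyDeriv : Continuous cayleyDeriv :=
  continuous_const.div (by fun_prop) fun s => pow_ne_zero 2 (one_add_I_mul_ofReal_ne_zero s)

lemma re_cayley_mul_cayleyDeriv (s : ℝ) :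
    ((cayley s).re : ℂ) * cayleyDeriv s
      = -2 * I * (1 - s ^ 2) / (1 + s ^ 2) / (1 + I * s) ^ 2 := by
  rw [cayley_re, cayleyDeriv]
  push_cast
  ring

lemma cayleyDeriv_sq_sub_re_cayley_mul (s : ℝ) :
    cayleyDeriv s ^ 2 - ((cayley s).re : ℂ) * (-4 / (1 + I * s) ^ 3)
      = 4 * I * s / (1 + s ^ 2) / (1 + I * s) ^ 2 := by
  have hz := one_add_I_mul_ofReal_ne_zero s
  have hs : (1 + (s : ℂ) ^ 2) ≠ 0 := by exact_mod_cast (by positivity : (1 + s ^ 2) ≠ 0)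
  rw [cayley_re, cayleyDeriv]
  push_cast
  field_simp
  linear_combination (4 - 4 * s ^ 2 - 4 * I * s ^ 3) * I_sq

theorem ernstEqAt_cayley_comp {u : ℝ → ℝ → ℝ} {uy : ℝ → ℝ} {x y ux uxy : ℝ}
    (hux : HasDerivAt (fun t => u t y) ux x)
    (huy : ∀ᶠ t in 𝓝 x, HasDerivAt (u t) (uy t) y)
    (huxy : HasDerivAt uy uxy x)
    (h : (1 - u x y ^ 2) * (uxy - (ux + uy x) / (2 * (1 - x - y))) + 2 * u x y * ux * uy x = 0) :
    ErnstEqAt (fun a b => cayley (u a b)) x y := by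
  have hpdx : pdx (fun a b => cayley (u a b)) x y = ux * cayleyDeriv (u x y) :=
    hux.cayley.deriv
  have hpdy : (fun t => pdy (fun a b => cayley (u a b)) t y)
      =ᶠ[𝓝 x] fun t => uy t * cayleyDeriv (u t y) := by
    filter_upwards [huy] with t ht
    exact ht.cayley.deriv
  have hpdxy : pdxy (fun a b => cayley (u a b)) x y
      = uxy * cayleyDeriv (u x y) + uy x * (ux * (-4 / (1 + I * u x y) ^ 3)) := by
    rw [pdxy, pdx, hpdy.deriv_eq]
    exact (huxy.ofReal_comp.mul hux.cayleyDeriv).deriv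
  rw [ErnstEqAt, hpdx, hpdy.eq_of_nhds, hpdxy]
  have hC : ((1 - u x y ^ 2) * (uxy - (ux + uy x) / (2 * (1 - x - y)))
      + 2 * u x y * ux * uy x : ℝ) = (0 : ℂ) := by exact_mod_cast h
  push_cast at hC
  -- Both coefficients share the factor `1 / ((1 + u²) (1 + i u)²)`, which is what makes the
  -- complex equation a multiple of the real one.
  linear_combination
    (uxy - (ux + uy x) / (2 * (1 - x - y) : ℂ)) * re_cayley_mul_cayleyDeriv (u x y)
    - (ux * uy x : ℂ) * cayleyDeriv_sq_sub_re_cayley_mul (u x y)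
    + (-2 * I / (1 + u x y ^ 2) / (1 + I * u x y) ^ 2) * hC

section NutkuHalil

open Real

variable {x y : ℝ}

/-- The derivative of the angle `arcsin √x`: `√x` and `√(1 - x)` are its sine and cosine. -/
def angleDeriv (x : ℝ) : ℝ := 1 / (2 * √x * √(1 - x))

-- `sin (α - β)` and `cos (α - β)` for `√x = sin α`, `√y = sin β`.
def nutkuHalilSin (x y : ℝ) : ℝ := √x * √(1 - y) - √y * √(1 - x)

def nutkuHalilCos (x y : ℝ) : ℝ := √(1 - x) * √(1 - y) + √x * √y

lemma hasDerivAt_sqrt_eq_angleDeriv (hx0 : 0 < x) (hx1 : x < 1) :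
    HasDerivAt (√·) (√(1 - x) * angleDeriv x) x := by
  have := (sqrt_pos.2 (sub_pos.2 hx1)).ne'
  refine (hasDerivAt_sqrt hx0.ne').congr_deriv ?_
  rw [angleDeriv]
  field_simp

lemma hasDerivAt_sqrt_one_sub_eq_angleDeriv (hx0 : 0 < x) (hx1 : x < 1) :
    HasDerivAt (fun t => √(1 - t)) (-(√x * angleDeriv x)) x := by
  have := (sqrt_pos.2 hx0).ne'
  refine (((hasDerivAt_id x).const_sub 1).sqrt (sub_pos.2 hx1).ne').congr_deriv ?_
  rw [angleDeriv, id]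
  field_simp

lemma sq_sqrt_add_sq_sqrt_one_sub (hx0 : 0 ≤ x) (hx1 : x ≤ 1) :
    √x ^ 2 + √(1 - x) ^ 2 = 1 := by
  rw [sq_sqrt hx0, sq_sqrt (sub_nonneg.2 hx1)]
  ring

lemma nutkuHalil_eq_cayley (x y : ℝ) : NutkuHalil x y = cayley (nutkuHalilSin x y) := by
  simp only [NutkuHalil, cayley, nutkuHalilSin]
  push_cast
  ring_nf

lemma nutkuHalilSin_swap (x y : ℝ) : nutkuHalilSin y x = -nutkuHalilSin x y := by
  rw [nutkuHalilSin, nutkuHalilSin]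
  ring

lemma nutkuHalil_swap (x y : ℝ) : NutkuHalil x y = conj (NutkuHalil y x) := by
  rw [nutkuHalil_eq_cayley, nutkuHalil_eq_cayley, nutkuHalilSin_swap, cayley_neg]

lemma nutkuHalilCos_pos (hx : x < 1) (hy : y < 1) : 0 < nutkuHalilCos x y := by
  have := sqrt_pos.2 (sub_pos.2 hx)
  have := sqrt_pos.2 (sub_pos.2 hy)
  rw [nutkuHalilCos]
  positivity

lemma one_sub_nutkuHalilSin_sq (hx0 : 0 ≤ x) (hx1 : x ≤ 1) (hy0 : 0 ≤ y) (hy1 : y ≤ 1) :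
    1 - nutkuHalilSin x y ^ 2 = nutkuHalilCos x y ^ 2 := by
  rw [nutkuHalilSin, nutkuHalilCos]
  linear_combination (-(√y ^ 2 + √(1 - y) ^ 2)) * sq_sqrt_add_sq_sqrt_one_sub hx0 hx1
    - sq_sqrt_add_sq_sqrt_one_sub hy0 hy1

lemma one_sub_sub_mul_nutkuHalilSin (hx0 : 0 ≤ x) (hx1 : x ≤ 1) (hy0 : 0 ≤ y) (hy1 : y ≤ 1) :
    (1 - x - y) * nutkuHalilSin x y
      = nutkuHalilCos x y * (√x * √(1 - x) - √y * √(1 - y)) := by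
  rw [nutkuHalilSin, nutkuHalilCos]
  linear_combination (-(√x * √(1 - y))) * sq_sqrt_add_sq_sqrt_one_sub hx0 hx1
    + (√y * √(1 - x)) * sq_sqrt_add_sq_sqrt_one_sub hy0 hy1
    + (√x * √(1 - y) - √y * √(1 - x)) * (sq_sqrt hx0 + sq_sqrt hy0)

lemma hasDerivAt_nutkuHalilSin_fst (hx0 : 0 < x) (hx1 : x < 1) :
    HasDerivAt (fun t => nutkuHalilSin t y) (nutkuHalilCos x y * angleDeriv x) x := by
  refine (((hasDerivAt_sqrt_eq_angleDeriv hx0 hx1).mul_const (√(1 - y))).sub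
    ((hasDerivAt_sqrt_one_sub_eq_angleDeriv hx0 hx1).const_mul (√y))).congr_deriv ?_
  rw [nutkuHalilCos]
  ring

lemma hasDerivAt_nutkuHalilSin_snd (hy0 : 0 < y) (hy1 : y < 1) :
    HasDerivAt (nutkuHalilSin x) (-(nutkuHalilCos x y * angleDeriv y)) y := by
  refine (((hasDerivAt_sqrt_one_sub_eq_angleDeriv hy0 hy1).const_mul (√x)).sub
    ((hasDerivAt_sqrt_eq_angleDeriv hy0 hy1).mul_const (√(1 - x)))).congr_deriv ?_
  rw [nutkuHalilCos]
  ring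

lemma hasDerivAt_nutkuHalilCos_fst (hx0 : 0 < x) (hx1 : x < 1) :
    HasDerivAt (fun t => nutkuHalilCos t y) (-(nutkuHalilSin x y * angleDeriv x)) x := by
  refine (((hasDerivAt_sqrt_one_sub_eq_angleDeriv hx0 hx1).mul_const (√(1 - y))).add
    ((hasDerivAt_sqrt_eq_angleDeriv hx0 hx1).mul_const (√y))).congr_deriv ?_
  rw [nutkuHalilSin]
  ring

lemma nutkuHalil_reduced_eq (hx0 : 0 < x) (hy0 : 0 < y) (hxy : x + y < 1) :
    (1 - nutkuHalilSin x y ^ 2) *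
        (nutkuHalilSin x y * angleDeriv x * angleDeriv y
          - (nutkuHalilCos x y * angleDeriv x + -(nutkuHalilCos x y * angleDeriv y))
            / (2 * (1 - x - y)))
      + 2 * nutkuHalilSin x y * (nutkuHalilCos x y * angleDeriv x)
          * -(nutkuHalilCos x y * angleDeriv y) = 0 := by
  have hx1 : x < 1 := by linarith
  have hy1 : y < 1 := by linarith
  have hw := one_sub_sub_mul_nutkuHalilSin hx0.le hx1.le hy0.le hy1.le
  have : 1 - x - y ≠ 0 := by linarith
  have := (sqrt_pos.2 hx0).ne'
  have := (sqrt_pos.2 hy0).ne'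
  have := (sqrt_pos.2 (sub_pos.2 hx1)).ne'
  have := (sqrt_pos.2 (sub_pos.2 hy1)).ne'
  rw [one_sub_nutkuHalilSin_sq hx0.le hx1.le hy0.le hy1.le, angleDeriv, angleDeriv]
  field_simp
  linear_combination (-nutkuHalilCos x y ^ 2) * hw

lemma ernstEqAt_nutkuHalil (hx0 : 0 < x) (hy0 : 0 < y) (hxy : x + y < 1) :
    ErnstEqAt NutkuHalil x y := by
  have hx1 : x < 1 := by linarith
  have hy1 : y < 1 := by linarith
  rw [show NutkuHalil = fun a b => cayley (nutkuHalilSin a b) from funext₂ nutkuHalil_eq_cayley]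
  exact ernstEqAt_cayley_comp (hasDerivAt_nutkuHalilSin_fst hx0 hx1)
    (.of_forall fun _ => hasDerivAt_nutkuHalilSin_snd hy0 hy1)
    (((hasDerivAt_nutkuHalilCos_fst hx0 hx1).mul_const (angleDeriv y)).neg.congr_deriv (by ring))
    (nutkuHalil_reduced_eq hx0 hy0 hxy)

lemma nutkuHalil_re_pos (hx0 : 0 ≤ x) (hx1 : x < 1) (hy0 : 0 ≤ y) (hy1 : y < 1) :
    0 < (NutkuHalil x y).re := by
  rw [nutkuHalil_eq_cayley, cayley_re, one_sub_nutkuHalilSin_sq hx0 hx1.le hy0 hy1.le]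
  exact div_pos (pow_pos (nutkuHalilCos_pos hx1 hy1) 2) (by positivity)

lemma pdx_nutkuHalil (hx0 : 0 < x) (hx1 : x < 1) :
    pdx NutkuHalil x y
      = (nutkuHalilCos x y * angleDeriv x : ℝ) * cayleyDeriv (nutkuHalilSin x y) := by
  rw [pdx, show (fun t => NutkuHalil t y) = fun t => cayley (nutkuHalilSin t y) from
    funext fun t => nutkuHalil_eq_cayley t y]
  exact (hasDerivAt_nutkuHalilSin_fst hx0 hx1).cayley.deriv

lemma pdy_nutkuHalil (x y : ℝ) : pdy NutkuHalil x y = conj (pdx NutkuHalil y x) := by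
  rw [pdy, pdx, show (fun t => NutkuHalil x t) = fun t => star (NutkuHalil t x) from
    funext fun t => nutkuHalil_swap x t, deriv.star]
  rfl

lemma tendsto_sqrt_mul_pdx_nutkuHalil (y : ℝ) :
    Tendsto (fun x : ℝ => (√x : ℂ) * pdx NutkuHalil x y) (𝓝[>] 0)
      (𝓝 (I * √(1 - y) / (I + √y) ^ 2)) := by
  let g : ℝ → ℂ := fun x =>
    (nutkuHalilCos x y / (2 * √(1 - x)) : ℝ) * cayleyDeriv (nutkuHalilSin x y)
  have hg : ContinuousAt g 0 := by
    have hC : Continuous fun x => nutkuHalilCos x y := by unfold nutkuHalilCos; fun_prop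
    have hS : Continuous fun x => nutkuHalilSin x y := by unfold nutkuHalilSin; fun_prop
    exact (continuous_ofReal.continuousAt.comp (hC.continuousAt.div (by fun_prop) (by simp))).mul
      (continuous_cayleyDeriv.comp hS).continuousAt
  have heq : g =ᶠ[𝓝[>] 0] fun x : ℝ => (√x : ℂ) * pdx NutkuHalil x y := by
    filter_upwards [Ioo_mem_nhdsGT one_pos] with x hx
    have := (sqrt_pos.2 hx.1).ne'
    rw [pdx_nutkuHalil hx.1 hx.2, angleDeriv, ← mul_assoc, ← ofReal_mul]
    field_simp
    rfl
  have hval : g 0 = I * √(1 - y) / (I + √y) ^ 2 := by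
    have hC : nutkuHalilCos 0 y = √(1 - y) := by simp [nutkuHalilCos]
    have hS : nutkuHalilSin 0 y = -√y := by simp [nutkuHalilSin]
    simp only [g, hC, hS, sub_zero, Real.sqrt_one, cayleyDeriv]
    push_cast
    have hz : 1 + -(I * √y) ≠ 0 := by simpa using one_add_I_mul_ofReal_ne_zero (-√y)
    have hI : I + √y ≠ 0 := fun h => by simpa using congrArg im h
    field_simp
    linear_combination (-(√(1 - y) : ℂ) * (1 + (√y : ℂ) ^ 2)) * I_sq
  exact hval ▸ (hg.tendsto.mono_left nhdsWithin_le_nhds).congr' heq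

lemma tendsto_sqrt_mul_pdy_nutkuHalil (x : ℝ) :
    Tendsto (fun y : ℝ => (√y : ℂ) * pdy NutkuHalil x y) (𝓝[>] 0)
      (𝓝 (-(I * √(1 - x)) / (I - √x) ^ 2)) := by
  have h := (continuous_conj.tendsto _).comp (tendsto_sqrt_mul_pdx_nutkuHalil x)
  simp only [Function.comp_def, map_mul, conj_ofReal, ← pdy_nutkuHalil, map_div₀, map_pow,
    map_add, conj_I] at h
  convert h using 2
  ring

end NutkuHalil

lemma interior_TriD_subset :
    interior TriD ⊆ {p : ℝ × ℝ | 0 < p.1 ∧ 0 < p.2 ∧ p.1 + p.2 < 1} := by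
  intro p hp
  have h := interior_mono (t := Ici 0 ×ˢ Ici 0) (fun q hq => ⟨hq.1, hq.2.1⟩) hp
  rw [interior_prod_eq, interior_Ici] at h
  exact ⟨h.1, h.2, (interior_subset hp).2.2⟩

/-- The Nutku–Halil potential is well defined on Int D (its denominator has
real part 1), solves the hyperbolic Ernst equation there, has positive real part, and has
the stated boundary behavior. -/
theorem nutkuHalil_solution :
    (∀ p ∈ interior TriD,
      (1 + Complex.I * ((Real.sqrt p.1 * Real.sqrt (1 - p.2) : ℝ) : ℂ)
        - Complex.I * ((Real.sqrt p.2 * Real.sqrt (1 - p.1) : ℝ) : ℂ)).re = 1) ∧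
    (∀ p ∈ interior TriD, ErnstEqAt NutkuHalil p.1 p.2) ∧
    (∀ p ∈ interior TriD, 0 < (NutkuHalil p.1 p.2).re) ∧
    (∀ y ∈ Ico (0:ℝ) 1,
      Tendsto (fun x : ℝ => ((Real.sqrt x : ℝ) : ℂ) * pdx NutkuHalil x y) (𝓝[>] 0)
        (𝓝 (Complex.I * ((Real.sqrt (1 - y) : ℝ) : ℂ) /
          (Complex.I + ((Real.sqrt y : ℝ) : ℂ)) ^ 2))) ∧
    (∀ x ∈ Ico (0:ℝ) 1,
      Tendsto (fun y : ℝ => ((Real.sqrt y : ℝ) : ℂ) * pdy NutkuHalil x y) (𝓝[>] 0)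
        (𝓝 (-(Complex.I * ((Real.sqrt (1 - x) : ℝ) : ℂ)) /
          (Complex.I - ((Real.sqrt x : ℝ) : ℂ)) ^ 2))) := by
  refine ⟨fun _ _ => by simp, fun p hp => ?_, fun p hp => ?_,
    fun y _ => tendsto_sqrt_mul_pdx_nutkuHalil y, fun x _ => tendsto_sqrt_mul_pdy_nutkuHalil x⟩
  all_goals obtain ⟨hx, hy, hxy⟩ := interior_TriD_subset hp
  · exact ernstEqAt_nutkuHalil hx hy hxy
  · exact nutkuHalil_re_pos hx.le (by linarith) hy.le (by linarith)
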